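/- The braided integers satisfy ∑_{j=0}^{t} B(s, j) ∘ T^{[s]}_{1,j} = B(s+1, t), where T^{[s]}_{1,j} braids strand s+1 past the next j strands; i.e., summing the right-action shuffles over j recovers a single braided binomial with top argument increased by one. -/

import Mathlib

/- We work in the braid group algebra, modelled as an associative ring `A` equipped with a
family `ψ i` of elements satisfying the braid relations.  The braided binomials `Bb`
(sums of Matsumoto lifts of shuffle permutations) are encoded through their defining
recursion `B(r+1,s) = B(r,s)^{[1]} + B(r+1,s-1)^{[1]} · T_{r+1,1}`. -/

variable {A : Type*} [Ring A]

/-- Shift of the generator family by `k`: `(shiftFam ψ k) i = ψ (i + k)`. -/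
def shiftFam (ψ : ℕ → A) (k : ℕ) : ℕ → A := fun i => ψ (i + k)

/-- The descending product `ψ (j+n-1) ⋯ ψ (j+1) ψ j`. -/
def fall (ψ : ℕ → A) : ℕ → ℕ → A
  | _, 0 => 1
  | j, n + 1 => fall ψ (j + 1) n * ψ j

/-- `T_{m,n} = (ψ_n ⋯ ψ_1)(ψ_{n+1} ⋯ ψ_2) ⋯ (ψ_{n+m-1} ⋯ ψ_m)`, the braiding of the
first `m` strands past the next `n` strands. -/
def Tb (ψ : ℕ → A) : ℕ → ℕ → A
  | 0, _ => 1
  | m + 1, n => Tb ψ m n * fall ψ (m + 1) n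

/-- The braided binomial `B(r,s)`: the sum of the Matsumoto lifts of all `(r,s)`-shuffle
permutations. -/
def Bb (ψ : ℕ → A) : ℕ → ℕ → A
  | 0, _ => 1
  | _ + 1, 0 => 1
  | r + 1, s + 1 =>
      Bb (shiftFam ψ 1) r (s + 1) + Bb (shiftFam ψ 1) (r + 1) s * Tb ψ (r + 1) 1
  termination_by r s => (r, s)

/-! The defining recursion of `B` splits off the first strand; far commutativity of the
generators yields the dual recursion splitting off the last one,
`B(p+1,q+1) = B(p+1,q) + B(p,q+1) · (ψ_{p+q+1} ⋯ ψ_{p+1})`, by induction on `p + q`.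
Since `T^{[s]}_{1,j} = ψ_{s+j} ⋯ ψ_{s+1}`, the sum then telescopes in `t`. -/

def FarCommute (ψ : ℕ → A) : Prop :=
  ∀ i j, i + 2 ≤ j → ψ i * ψ j = ψ j * ψ i

theorem FarCommute.shiftFam {ψ : ℕ → A} (h : FarCommute ψ) (k : ℕ) :
    FarCommute (shiftFam ψ k) :=
  fun i j hij => h (i + k) (j + k) (by omega)

theorem fall_shiftFam (ψ : ℕ → A) (k : ℕ) : ∀ n j, fall (shiftFam ψ k) j n = fall ψ (j + k) n
  | 0, _ => rfl
  | n + 1, j => by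
    rw [fall, fall, fall_shiftFam ψ k n (j + 1), Nat.add_right_comm]
    rfl

theorem Tb_one_left (ψ : ℕ → A) (n : ℕ) : Tb ψ 1 n = fall ψ 1 n := by
  simp [Tb]

theorem Tb_succ_one (ψ : ℕ → A) (m : ℕ) : Tb ψ (m + 1) 1 = Tb ψ m 1 * ψ (m + 1) := by
  simp [Tb, fall]

theorem Bb_zero_left (ψ : ℕ → A) (q : ℕ) : Bb ψ 0 q = 1 := by
  simp [Bb]

theorem Bb_zero_right (ψ : ℕ → A) : ∀ p, Bb ψ p 0 = 1
  | 0 => by simp [Bb]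
  | _ + 1 => by simp [Bb]

theorem Bb_succ_succ (ψ : ℕ → A) (p q : ℕ) :
    Bb ψ (p + 1) (q + 1) =
      Bb (shiftFam ψ 1) p (q + 1) + Bb (shiftFam ψ 1) (p + 1) q * Tb ψ (p + 1) 1 := by
  rw [Bb]

theorem Bb_succ_one (ψ : ℕ → A) : ∀ p, Bb ψ (p + 1) 1 = 1 + Bb ψ p 1 * ψ (p + 1)
  | 0 => by simp [Bb_succ_succ, Bb_zero_left, Bb_zero_right, Tb, fall]
  | p + 1 => by
    rw [Bb_succ_succ, Bb_succ_one (shiftFam ψ 1) p, Bb_succ_succ, Bb_zero_right, one_mul,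
      Bb_zero_right, one_mul, Tb_succ_one]
    simp only [shiftFam, add_mul, add_assoc]

section FarCommute

variable {ψ : ℕ → A} (hψ : FarCommute ψ)
include hψ

theorem FarCommute.commute_fall {i j : ℕ} (hij : i + 2 ≤ j) (n : ℕ) :
    ψ i * fall ψ j n = fall ψ j n * ψ i := by
  induction n generalizing j with
  | zero => simp [fall]
  | succ n ih =>
    rw [fall, ← mul_assoc, ih (by omega), mul_assoc, hψ i j hij, mul_assoc]

theorem FarCommute.fall_commute_Tb_one {m j : ℕ} (hmj : m + 2 ≤ j) (n : ℕ) :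
    fall ψ j n * Tb ψ m 1 = Tb ψ m 1 * fall ψ j n := by
  induction m with
  | zero => simp [Tb]
  | succ m ih =>
    rw [Tb_succ_one, ← mul_assoc, ih (by omega), mul_assoc,
      ← hψ.commute_fall hmj, mul_assoc]

theorem FarCommute.fall_mul_Tb_one (r n : ℕ) :
    fall ψ (r + 2) n * Tb ψ (r + 1) 1 = Tb ψ r 1 * fall ψ (r + 1) (n + 1) := by
  rw [Tb_succ_one, ← mul_assoc, hψ.fall_commute_Tb_one le_rfl, mul_assoc]
  rfl

end FarCommute

theorem FarCommute.Bb_succ_succ_last {ψ : ℕ → A} (hψ : FarCommute ψ) :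
    ∀ p q, Bb ψ (p + 1) (q + 1) = Bb ψ (p + 1) q + Bb ψ p (q + 1) * fall ψ (p + 1) (q + 1)
  | p, 0 => by simp [Bb_succ_one, Bb_zero_right, fall]
  | 0, q + 1 => by
    have hψ1 := hψ.shiftFam 1
    rw [Bb_succ_succ ψ 0 (q + 1), hψ1.Bb_succ_succ_last 0 q, Bb_succ_succ ψ 0 q, Bb_zero_left,
      Bb_zero_left, Bb_zero_left, fall_shiftFam, add_mul, mul_assoc,
      hψ.fall_mul_Tb_one 0 (q + 1)]
    simp only [Tb, one_mul]
    abel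
  | p + 1, q + 1 => by
    have hψ1 := hψ.shiftFam 1
    rw [Bb_succ_succ ψ (p + 1) (q + 1), hψ1.Bb_succ_succ_last p (q + 1),
      hψ1.Bb_succ_succ_last (p + 1) q, Bb_succ_succ ψ (p + 1) q, Bb_succ_succ ψ p (q + 1),
      fall_shiftFam, fall_shiftFam, add_mul, add_mul, mul_assoc _ (fall _ _ _),
      hψ.fall_mul_Tb_one (p + 1) (q + 1), ← mul_assoc]
    abel
termination_by p q => p + q

theorem braided_binomial_sum_identity_general (ψ : ℕ → A)
    (hcomm : ∀ i j, i + 2 ≤ j → ψ i * ψ j = ψ j * ψ i)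
    (s t : ℕ) :
    (∑ j ∈ Finset.range (t + 1), Bb ψ s j * Tb (shiftFam ψ s) 1 j)
      = Bb ψ (s + 1) t := by
  induction t with
  | zero => simp [Bb_zero_right, Tb, fall]
  | succ t ih =>
    rw [Finset.sum_range_succ, ih, FarCommute.Bb_succ_succ_last hcomm, Tb_one_left,
      fall_shiftFam, Nat.add_comm 1 s]

/-- the braided-integer summation identity
`∑_{j=0}^{t} B(s, j) ∘ T^{[s]}_{1,j} = B(s+1, t)`, where `T^{[s]}_{1,j}` braids strand
`s+1` past the next `j` strands. -/
theorem braided_binomial_sum_identity (ψ : ℕ → A)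
    (hbraid : ∀ i, ψ i * ψ (i + 1) * ψ i = ψ (i + 1) * ψ i * ψ (i + 1))
    (hcomm : ∀ i j, i + 2 ≤ j → ψ i * ψ j = ψ j * ψ i)
    (s t : ℕ) :
    (∑ j ∈ Finset.range (t + 1), Bb ψ s j * Tb (shiftFam ψ s) 1 j)
      = Bb ψ (s + 1) t :=
  braided_binomial_sum_identity_general ψ hcomm s t
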